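/- Shishkin-type decomposition of the exact solution: let u ∈ C^{6,3}([0,1] × [0,T])^M satisfy the layer-adapted bounds |∂^m u_k(x,t)/∂x^m| ≤ C₀(1 + ε^{−m/2} B_ε(x)) for 0 ≤ m ≤ 6, all k, and all (x,t), with β ∈ (0,β*) fixed. Set x* = 4√(ε/β) · ln(1/√ε) and assume x* ≤ 1/4. Then there exist functions v, w : [0,1] × [0,T] → ℝ^M with u = v + w such that: (i) for each t, v(·,t) equals the degree-4 Taylor polynomial of u(·,t) at x* on [0,x*], equals u(·,t) on [x*, 1−x*], and equals the degree-4 Taylor polynomial of u(·,t) at 1−x* on [1−x*,1]; and (ii) there is a constant C, independent of ε, such that for s = 0,…,6, every component k, every t ∈ [0,T], and every x ∈ [0,1] \ {x*, 1−x*}: |∂^s v_k(x,t)/∂x^s| ≤ C(1 + ε^{2−s/2}) and |∂^s w_k(x,t)/∂x^s| ≤ C ε^{−s/2} B_ε(x). -/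

import Mathlib

/-!
Write `c = √(β/ε)`, so that `B_ε x = e^{-c x} + e^{-c (1 - x)}`. The transition point `δ = x*` is
exactly where `e^{-c δ} = ε²`, so on `[δ, 1 - δ]` the layer term `ε^{-m/2} B_ε` is at most
`2 ε^{2 - m/2}`: this bounds `v = u` there, and bounds the Taylor coefficients of `u` at `δ` by
`3 C₀`, hence all derivatives of the Taylor polynomial on `[0, δ]`.

On `[0, δ]` the layer part `w = u - v` has vanishing derivatives of order `< 4` at `δ`, and
`|w⁽⁴⁾ y| ≤ 6 C₀ ε⁻² e^{-c y}` because `1 ≤ ε⁻² e^{-c y}` there. Integrating back from `δ` gains a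
factor `1/c = √(ε/β)` per step (not a factor `δ`, which would cost a power of `log (1/ε)`), so
`|w⁽ˢ⁾| ≲ ε^{-2} ε^{(4-s)/2} e^{-c x} = ε^{-s/2} e^{-c x}` for `s ≤ 4`. For `s ≥ 5`, `w⁽ˢ⁾ = u⁽ˢ⁾`
and `ε^{-s/2} B_ε ≥ 1` on `[0, δ]`, so the hypothesis already has the required form. The end
`[1 - δ, 1]` is the mirror image of `[0, δ]` under `x ↦ 1 - x`, which preserves `B_ε`.
-/

noncomputable def Bfun (β ε x : ℝ) : ℝ :=
  Real.exp (-x * Real.sqrt (β/ε)) + Real.exp (-(1-x) * Real.sqrt (β/ε))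

open Set Real Filter Topology

section Taylor

variable {E : Type*} [NormedAddCommGroup E] [NormedSpace ℝ E]

theorem iteratedDeriv_iteratedDeriv (f : ℝ → E) (j k : ℕ) :
    iteratedDeriv j (iteratedDeriv k f) = iteratedDeriv (j + k) f := by
  simp only [iteratedDeriv_eq_iterate, Function.iterate_add_apply]

theorem contDiff_taylorWithinEval_univ (f : ℝ → E) (n : ℕ) (x₀ : ℝ) :
    ContDiff ℝ ⊤ (taylorWithinEval f n univ x₀) := by
  rw [funext (taylor_within_apply f n univ x₀)]
  fun_prop

theorem iteratedDeriv_sub_taylorWithinEval_univ {f : ℝ → E} {m : ℕ} (hf : ContDiff ℝ m f)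
    (n : ℕ) (x₀ x : ℝ) :
    iteratedDeriv m (f - taylorWithinEval f n univ x₀) x =
      iteratedDeriv m f x - iteratedDeriv m (taylorWithinEval f n univ x₀) x :=
  iteratedDeriv_sub hf.contDiffAt
    ((contDiff_taylorWithinEval_univ f n x₀).of_le le_top).contDiffAt

theorem deriv_taylorWithinEval_univ_succ (f : ℝ → E) (n : ℕ) (x₀ : ℝ) :
    deriv (taylorWithinEval f (n + 1) univ x₀) = taylorWithinEval (deriv f) n univ x₀ := by
  funext x
  simpa using (hasDerivAt_taylorWithinEval_succ (s := univ) (x₀ := x₀) (x := x) f n).deriv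

theorem iteratedDeriv_taylorWithinEval_univ_add (f : ℝ → E) (n j : ℕ) (x₀ : ℝ) :
    iteratedDeriv j (taylorWithinEval f (n + j) univ x₀) =
      taylorWithinEval (iteratedDeriv j f) n univ x₀ := by
  induction j generalizing f with
  | zero => simp
  | succ j ih =>
    rw [iteratedDeriv_succ', ← add_assoc, deriv_taylorWithinEval_univ_succ, ih,
      iteratedDeriv_succ']

theorem iteratedDeriv_taylorWithinEval_univ (f : ℝ → E) {n j : ℕ} (hjn : j ≤ n) (x₀ : ℝ) :
    iteratedDeriv j (taylorWithinEval f n univ x₀) =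
      taylorWithinEval (iteratedDeriv j f) (n - j) univ x₀ := by
  obtain ⟨k, rfl⟩ := Nat.exists_eq_add_of_le' hjn
  rw [iteratedDeriv_taylorWithinEval_univ_add, Nat.add_sub_cancel]

theorem iteratedDeriv_taylorWithinEval_univ_of_lt (f : ℝ → E) {n j : ℕ} (hnj : n < j)
    (x₀ : ℝ) : iteratedDeriv j (taylorWithinEval f n univ x₀) = 0 := by
  induction n generalizing f j with
  | zero =>
    funext x
    simp only [funext (taylor_within_zero_eval f univ x₀), iteratedDeriv_const,
      if_neg hnj.ne', Pi.zero_apply]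
  | succ n ih =>
    obtain ⟨j, rfl⟩ : ∃ i, j = i + 1 := ⟨j - 1, by omega⟩
    rw [iteratedDeriv_succ', deriv_taylorWithinEval_univ_succ, ih _ (by omega)]

theorem taylorWithinEval_univ_const_sub (f : ℝ → E) (n : ℕ) (a x₀ : ℝ) :
    taylorWithinEval f n univ (a - x₀) =
      fun x => taylorWithinEval (fun z => f (a - z)) n univ x₀ (a - x) := by
  funext x
  simp only [taylor_within_apply, iteratedDerivWithin_univ, iteratedDeriv_comp_const_sub,
    smul_smul]
  refine Finset.sum_congr rfl fun k _ => ?_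
  congr 1
  rw [mul_assoc, ← mul_pow]
  congr 2
  ring

end Taylor

theorem taylorWithinEval_univ_eq_sum (f : ℝ → ℝ) (n : ℕ) (x₀ x : ℝ) :
    taylorWithinEval f n univ x₀ x =
      ∑ ν ∈ Finset.range (n + 1), (x - x₀) ^ ν / ν.factorial * iteratedDeriv ν f x₀ := by
  simp only [taylor_within_apply, iteratedDerivWithin_univ, smul_eq_mul]
  exact Finset.sum_congr rfl fun ν _ => by ring

theorem abs_iteratedDeriv_taylorWithinEval_le {f : ℝ → ℝ} {n : ℕ} {x₀ x K : ℝ}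
    (hx : |x - x₀| ≤ 1) (hf : ∀ k ≤ n, |iteratedDeriv k f x₀| ≤ K) (s : ℕ) :
    |iteratedDeriv s (taylorWithinEval f n univ x₀) x| ≤ (n + 1) * K := by
  have hK : 0 ≤ K := (abs_nonneg _).trans (hf 0 n.zero_le)
  rcases le_or_gt s n with hsn | hns
  · rw [iteratedDeriv_taylorWithinEval_univ f hsn, taylorWithinEval_univ_eq_sum]
    calc _ ≤ ∑ ν ∈ Finset.range (n - s + 1), K := by
          refine (Finset.abs_sum_le_sum_abs _ _).trans (Finset.sum_le_sum fun ν hν => ?_)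
          have hpow : |(x - x₀) ^ ν / ν.factorial| ≤ 1 := by
            rw [abs_div, abs_pow, Nat.abs_cast]
            exact div_le_one_of_le₀ ((pow_le_one₀ (abs_nonneg _) hx).trans
              (by exact_mod_cast ν.factorial_pos)) (Nat.cast_nonneg _)
          rw [abs_mul, iteratedDeriv_iteratedDeriv]
          exact (mul_le_of_le_one_left (abs_nonneg _) hpow).trans
            (hf _ (by have := Finset.mem_range.1 hν; omega))
      _ ≤ (n + 1) * K := by
          rw [Finset.sum_const, Finset.card_range, nsmul_eq_mul]
          gcongr
          exact_mod_cast (by omega : n - s + 1 ≤ n + 1)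
  · rw [iteratedDeriv_taylorWithinEval_univ_of_lt f hns, Pi.zero_apply, abs_zero]
    positivity

theorem abs_le_of_abs_deriv_le_exp {g g' : ℝ → ℝ} {a b c K : ℝ} (hc : 0 < c) (hK : 0 ≤ K)
    (hab : a ≤ b) (hg : ∀ x ∈ Icc a b, HasDerivAt g (g' x) x) (hgb : g b = 0)
    (hbound : ∀ x ∈ Icc a b, |g' x| ≤ K * exp (-x * c)) :
    |g a| ≤ K / c * exp (-a * c) := by
  -- reflected about `b`, this is the fencing inequality started at `b`
  have hrefl : ∀ y ∈ Icc 0 (b - a), HasDerivAt (fun y => g (b - y)) (-g' (b - y)) y :=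
    fun y hy => (hg (b - y) ⟨by linarith [hy.2], by linarith [hy.1]⟩).comp_const_sub b y
  have hfence : ∀ y,
      HasDerivAt (fun y => K / c * exp (-(b - y) * c)) (K * exp (-(b - y) * c)) y := fun y =>
    ((((hasDerivAt_id y).const_sub b).neg.mul_const c).exp.const_mul (K / c)).congr_deriv
      (by field_simp; simp [neg_mul_eq_mul_neg])
  have := image_norm_le_of_norm_deriv_right_le_deriv_boundary
    (fun y hy => (hrefl y hy).continuousAt.continuousWithinAt)
    (fun y hy => (hrefl y (Ico_subset_Icc_self hy)).hasDerivWithinAt)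
    (by simp only [sub_zero, hgb, norm_zero, neg_mul]; positivity) hfence
    (fun y hy => by simpa using hbound (b - y) ⟨by linarith [hy.2], by linarith [hy.1]⟩)
    (x := b - a) ⟨by linarith, le_rfl⟩
  simpa using this

theorem abs_iteratedDeriv_le_of_flat {g : ℝ → ℝ} {n : ℕ} {a b c A : ℝ} (hg : ContDiff ℝ n g)
    (hc : 0 < c) (hA : 0 ≤ A) (hflat : ∀ m < n, iteratedDeriv m g b = 0)
    (hbound : ∀ y ∈ Icc a b, |iteratedDeriv n g y| ≤ A * exp (-y * c)) {m : ℕ} (hm : m ≤ n) :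
    ∀ y ∈ Icc a b, |iteratedDeriv m g y| ≤ A * c⁻¹ ^ (n - m) * exp (-y * c) := by
  induction hm using Nat.decreasingInduction with
  | self => simpa using hbound
  | of_succ k hk ih =>
    intro y hy
    have hderiv : ∀ x ∈ Icc y b,
        HasDerivAt (iteratedDeriv k g) (iteratedDeriv (k + 1) g x) x := fun x _ => by
      rw [iteratedDeriv_succ]
      exact ((hg.differentiable_iteratedDeriv k (by exact_mod_cast hk)) x).hasDerivAt
    have := abs_le_of_abs_deriv_le_exp hc (by positivity) hy.2 hderiv (hflat k hk)
      (fun x hx => ih x ⟨hy.1.trans hx.1, hx.2⟩)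
    rwa [div_eq_mul_inv, mul_assoc A, ← pow_succ, Nat.sub_add_eq, Nat.sub_add_cancel (by omega)]
      at this

theorem rpow_neg_half_mul_sq {ε : ℝ} (hε : 0 < ε) (m : ℕ) :
    ε ^ (-(m : ℝ) / 2) * ε ^ 2 = ε ^ ((2 : ℝ) - m / 2) := by
  rw [← rpow_natCast ε 2, ← rpow_add hε]
  congr 1
  push_cast
  ring

theorem rpow_neg_half_four {ε : ℝ} (hε : 0 < ε) : ε ^ (-((4 : ℕ) : ℝ) / 2) = (ε ^ 2)⁻¹ := by
  rw [← rpow_natCast ε 2, ← rpow_neg hε.le]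
  norm_num

theorem inv_sq_mul_inv_sqrt_pow_le {β ε : ℝ} (hβ : 0 < β) (hε : 0 < ε) {s : ℕ} (hs : s ≤ 4) :
    (ε ^ 2)⁻¹ * (√(β / ε))⁻¹ ^ (4 - s) ≤ (1 + (√β)⁻¹) ^ 4 * ε ^ (-(s : ℝ) / 2) := by
  have hsq : (ε ^ 2)⁻¹ * √ε ^ (4 - s) = ε ^ (-(s : ℝ) / 2) := by
    rw [sqrt_eq_rpow, ← rpow_natCast (ε ^ (1 / 2 : ℝ)), ← rpow_mul hε.le, ← rpow_natCast ε 2,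
      ← rpow_neg hε.le, ← rpow_add hε, Nat.cast_sub hs]
    congr 1
    push_cast
    ring
  have hβpow : (√β)⁻¹ ^ (4 - s) ≤ (1 + (√β)⁻¹) ^ 4 :=
    (pow_le_pow_left₀ (by positivity) (le_add_of_nonneg_left zero_le_one) _).trans
      (pow_le_pow_right₀ (le_add_of_nonneg_right (by positivity)) (Nat.sub_le 4 s))
  rw [sqrt_div' β hε.le, inv_div, div_eq_mul_inv, mul_pow, ← mul_assoc, hsq, mul_comm]
  gcongr

theorem Bfun_one_sub (β ε x : ℝ) : Bfun β ε (1 - x) = Bfun β ε x := by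
  rw [Bfun, Bfun, sub_sub_cancel, add_comm]

theorem exp_le_Bfun (β ε x : ℝ) : exp (-x * √(β / ε)) ≤ Bfun β ε x :=
  le_add_of_nonneg_right (exp_pos _).le

theorem Bfun_nonneg (β ε x : ℝ) : 0 ≤ Bfun β ε x :=
  (exp_pos _).le.trans (exp_le_Bfun β ε x)

theorem Bfun_le_two_mul_exp {β ε x : ℝ} (hx : x ≤ 1 / 2) :
    Bfun β ε x ≤ 2 * exp (-x * √(β / ε)) := by
  have : exp (-(1 - x) * √(β / ε)) ≤ exp (-x * √(β / ε)) :=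
    exp_le_exp.2 (by nlinarith [sqrt_nonneg (β / ε)])
  rw [Bfun]
  linarith

structure IsTransitionPoint (β ε δ : ℝ) : Prop where
  beta_pos : 0 < β
  eps_pos : 0 < ε
  eps_le_one : ε ≤ 1
  nonneg : 0 ≤ δ
  le_half : δ ≤ 1 / 2
  exp_eq : exp (-δ * √(β / ε)) = ε ^ 2

theorem isTransitionPoint_of_le {β ε : ℝ} (hβ : 0 < β) (hε : 0 < ε) (hε1 : ε ≤ 1)
    (h : 4 * √(ε / β) * log (1 / √ε) ≤ 1 / 4) :
    IsTransitionPoint β ε (4 * √(ε / β) * log (1 / √ε)) where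
  beta_pos := hβ
  eps_pos := hε
  eps_le_one := hε1
  nonneg := mul_nonneg (by positivity)
    (log_nonneg (one_le_one_div (Real.sqrt_pos.2 hε) (sqrt_le_one.2 hε1)))
  le_half := by linarith
  exp_eq := by
    have h₁ : √(ε / β) * √(β / ε) = 1 := by
      rw [← sqrt_mul (by positivity), div_mul_div_comm, mul_comm ε β, div_self (by positivity),
        sqrt_one]
    have h₂ : log (1 / √ε) = -(log ε / 2) := by
      rw [one_div, log_inv, log_sqrt hε.le]
    rw [show -(4 * √(ε / β) * log (1 / √ε)) * √(β / ε) = log (ε ^ 2) by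
      rw [h₂, log_pow]; linear_combination (2 * log ε) * h₁, exp_log (by positivity)]

namespace IsTransitionPoint

variable {β ε δ y : ℝ}

theorem sqrt_div_pos (hδ : IsTransitionPoint β ε δ) : 0 < √(β / ε) :=
  Real.sqrt_pos.2 (div_pos hδ.beta_pos hδ.eps_pos)

theorem sq_le_exp (hδ : IsTransitionPoint β ε δ) (hy : y ≤ δ) :
    ε ^ 2 ≤ exp (-y * √(β / ε)) :=
  hδ.exp_eq ▸ exp_le_exp.2 (by nlinarith [hδ.sqrt_div_pos])

theorem exp_le_sq (hδ : IsTransitionPoint β ε δ) (hy : δ ≤ y) :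
    exp (-y * √(β / ε)) ≤ ε ^ 2 :=
  hδ.exp_eq ▸ exp_le_exp.2 (by nlinarith [hδ.sqrt_div_pos])

theorem Bfun_le (hδ : IsTransitionPoint β ε δ) (hy : y ∈ Icc δ (1 - δ)) :
    Bfun β ε y ≤ 2 * ε ^ 2 := by
  have h₁ := hδ.exp_le_sq hy.1
  have h₂ := hδ.exp_le_sq (y := 1 - y) (by linarith [hy.2])
  rw [Bfun]
  linarith

theorem Icc_subset (hδ : IsTransitionPoint β ε δ) : Icc 0 δ ⊆ Icc 0 1 :=
  Icc_subset_Icc_right (by linarith [hδ.le_half])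

end IsTransitionPoint

def LayerBounded (C₀ β ε : ℝ) (f : ℝ → ℝ) : Prop :=
  ∀ m ≤ 6, ∀ x ∈ Icc (0 : ℝ) 1,
    |iteratedDeriv m f x| ≤ C₀ * (1 + ε ^ (-(m : ℝ) / 2) * Bfun β ε x)

/-- `15 = 5 · 3` bounds the Taylor polynomials (five terms, coefficients `≤ 3 C₀`); the power of
`1 + β^{-1/2}` absorbs the factors `β^{-j/2}`, `j ≤ 4`, lost when integrating the layer. -/
noncomputable def layerConst (C₀ β : ℝ) : ℝ :=
  15 * C₀ * (1 + (√β)⁻¹) ^ 4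

theorem one_le_layerFactor (β : ℝ) : 1 ≤ (1 + (√β)⁻¹) ^ 4 :=
  one_le_pow₀ (le_add_of_nonneg_right (by positivity))

theorem le_layerConst {C₀ : ℝ} (β : ℝ) (hC₀ : 0 ≤ C₀) : 15 * C₀ ≤ layerConst C₀ β :=
  le_mul_of_one_le_right (by positivity) (one_le_layerFactor β)

namespace LayerBounded

variable {C₀ β ε δ : ℝ} {f : ℝ → ℝ}

theorem comp_one_sub (hf : LayerBounded C₀ β ε f) :
    LayerBounded C₀ β ε (fun z => f (1 - z)) := by
  intro m hm x hx
  simp only [iteratedDeriv_comp_const_sub, smul_eq_mul]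
  rw [abs_mul, abs_pow, abs_neg, abs_one, one_pow, one_mul, ← Bfun_one_sub]
  exact hf m hm (1 - x) ⟨by linarith [hx.2], by linarith [hx.1]⟩

theorem abs_iteratedDeriv_le_of_mem_Icc (hf : LayerBounded C₀ β ε f)
    (hδ : IsTransitionPoint β ε δ) (hC₀ : 0 ≤ C₀) {m : ℕ} (hm : m ≤ 6) {x : ℝ}
    (hx : x ∈ Icc δ (1 - δ)) :
    |iteratedDeriv m f x| ≤ C₀ * (1 + 2 * ε ^ ((2 : ℝ) - m / 2)) :=
  calc |iteratedDeriv m f x| ≤ C₀ * (1 + ε ^ (-(m : ℝ) / 2) * Bfun β ε x) :=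
        hf m hm x ⟨hδ.nonneg.trans hx.1, hx.2.trans (by linarith [hδ.nonneg])⟩
    _ ≤ C₀ * (1 + ε ^ (-(m : ℝ) / 2) * (2 * ε ^ 2)) := by
        gcongr
        · exact rpow_nonneg hδ.eps_pos.le _
        · exact hδ.Bfun_le hx
    _ = C₀ * (1 + 2 * ε ^ ((2 : ℝ) - m / 2)) := by
        rw [← rpow_neg_half_mul_sq hδ.eps_pos]
        ring

theorem abs_iteratedDeriv_le_at_transitionPoint (hf : LayerBounded C₀ β ε f)
    (hδ : IsTransitionPoint β ε δ) (hC₀ : 0 ≤ C₀) {m : ℕ} (hm : m ≤ 4) :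
    |iteratedDeriv m f δ| ≤ 3 * C₀ := by
  have hpow : ε ^ ((2 : ℝ) - m / 2) ≤ 1 :=
    rpow_le_one hδ.eps_pos.le hδ.eps_le_one (by rify at hm; linarith)
  have := hf.abs_iteratedDeriv_le_of_mem_Icc hδ hC₀ (m := m) (by omega)
    ⟨le_rfl, by linarith [hδ.le_half]⟩
  nlinarith

theorem abs_iteratedDeriv_taylor_le (hf : LayerBounded C₀ β ε f) (hδ : IsTransitionPoint β ε δ)
    (hC₀ : 0 ≤ C₀) (s : ℕ) {x : ℝ} (hx : x ∈ Icc 0 δ) :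
    |iteratedDeriv s (taylorWithinEval f 4 univ δ) x| ≤ 15 * C₀ := by
  have hxδ : |x - δ| ≤ 1 := abs_le.2 ⟨by linarith [hx.1, hδ.le_half], by linarith [hx.2]⟩
  have := abs_iteratedDeriv_taylorWithinEval_le hxδ
    (fun k hk => hf.abs_iteratedDeriv_le_at_transitionPoint hδ hC₀ hk) s
  norm_num at this
  linarith

theorem abs_iteratedDeriv_four_sub_le (hf : LayerBounded C₀ β ε f)
    (hδ : IsTransitionPoint β ε δ) (hC₀ : 0 ≤ C₀) {y : ℝ} (hy : y ∈ Icc 0 δ) :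
    |iteratedDeriv 4 f y - iteratedDeriv 4 f δ| ≤
      6 * C₀ * (ε ^ 2)⁻¹ * exp (-y * √(β / ε)) := by
  have h₁ := hf 4 (by norm_num) y (hδ.Icc_subset hy)
  rw [rpow_neg_half_four hδ.eps_pos] at h₁
  have h₂ := hf.abs_iteratedDeriv_le_at_transitionPoint hδ hC₀ le_rfl
  have h₃ : Bfun β ε y ≤ 2 * exp (-y * √(β / ε)) :=
    Bfun_le_two_mul_exp (by linarith [hy.2, hδ.le_half])
  have h₄ : 1 ≤ (ε ^ 2)⁻¹ * exp (-y * √(β / ε)) := by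
    rw [inv_mul_eq_div, one_le_div (pow_pos hδ.eps_pos 2)]
    exact hδ.sq_le_exp hy.2
  calc _ ≤ |iteratedDeriv 4 f y| + |iteratedDeriv 4 f δ| := abs_sub _ _
    _ ≤ C₀ * (1 + (ε ^ 2)⁻¹ * (2 * exp (-y * √(β / ε)))) + 3 * C₀ := by
        gcongr
        exact h₁.trans (by gcongr)
    _ ≤ 6 * C₀ * (ε ^ 2)⁻¹ * exp (-y * √(β / ε)) := by nlinarith

theorem abs_iteratedDeriv_sub_taylor_le_of_le_four (hf : LayerBounded C₀ β ε f)
    (hfd : ContDiff ℝ 6 f) (hδ : IsTransitionPoint β ε δ) (hC₀ : 0 ≤ C₀) {s : ℕ} (hs : s ≤ 4)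
    {x : ℝ} (hx : x ∈ Icc 0 δ) :
    |iteratedDeriv s (f - taylorWithinEval f 4 univ δ) x| ≤
      6 * C₀ * (1 + (√β)⁻¹) ^ 4 * ε ^ (-(s : ℝ) / 2) * Bfun β ε x := by
  set T := taylorWithinEval f 4 univ δ
  have hsub : ∀ m ≤ 4, ∀ y,
      iteratedDeriv m (f - T) y = iteratedDeriv m f y - iteratedDeriv m T y := fun m hm y =>
    iteratedDeriv_sub_taylorWithinEval_univ (hfd.of_le (by exact_mod_cast (by omega : m ≤ 6))) _ _ _
  have hflat : ∀ m < 4, iteratedDeriv m (f - T) δ = 0 := fun m hm => by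
    rw [hsub m hm.le, iteratedDeriv_taylorWithinEval_univ f hm.le, taylorWithinEval_self,
      sub_self]
  have hbase : ∀ y ∈ Icc 0 δ,
      |iteratedDeriv 4 (f - T) y| ≤ 6 * C₀ * (ε ^ 2)⁻¹ * exp (-y * √(β / ε)) := fun y hy => by
    rw [hsub 4 le_rfl, iteratedDeriv_taylorWithinEval_univ f le_rfl, Nat.sub_self,
      taylor_within_zero_eval]
    exact hf.abs_iteratedDeriv_four_sub_le hδ hC₀ hy
  have hT : ContDiff ℝ 4 (f - T) :=
    (hfd.of_le (by norm_num)).sub ((contDiff_taylorWithinEval_univ f 4 δ).of_le le_top)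
  have := abs_iteratedDeriv_le_of_flat hT hδ.sqrt_div_pos (by positivity) hflat hbase hs x hx
  calc _ ≤ 6 * C₀ * ((ε ^ 2)⁻¹ * (√(β / ε))⁻¹ ^ (4 - s)) * exp (-x * √(β / ε)) :=
        this.trans_eq (by ring)
    _ ≤ 6 * C₀ * ((1 + (√β)⁻¹) ^ 4 * ε ^ (-(s : ℝ) / 2)) * Bfun β ε x :=
        mul_le_mul (mul_le_mul_of_nonneg_left
          (inv_sq_mul_inv_sqrt_pow_le hδ.beta_pos hδ.eps_pos hs) (by positivity))
          (exp_le_Bfun β ε x) (exp_pos _).le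
          (mul_nonneg (by positivity) (mul_nonneg (by positivity) (rpow_nonneg hδ.eps_pos.le _)))
    _ = _ := by ring

theorem abs_iteratedDeriv_sub_taylor_le_of_four_lt (hf : LayerBounded C₀ β ε f)
    (hfd : ContDiff ℝ 6 f) (hδ : IsTransitionPoint β ε δ) (hC₀ : 0 ≤ C₀) {s : ℕ} (hs : 4 < s)
    (hs6 : s ≤ 6) {x : ℝ} (hx : x ∈ Icc 0 δ) :
    |iteratedDeriv s (f - taylorWithinEval f 4 univ δ) x| ≤
      2 * C₀ * ε ^ (-(s : ℝ) / 2) * Bfun β ε x := by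
  rw [iteratedDeriv_sub_taylorWithinEval_univ (hfd.of_le (by exact_mod_cast hs6)),
    iteratedDeriv_taylorWithinEval_univ_of_lt f hs, Pi.zero_apply, sub_zero]
  have hlayer : 1 ≤ ε ^ (-(s : ℝ) / 2) * Bfun β ε x :=
    calc 1 ≤ ε ^ ((2 : ℝ) - s / 2) := one_le_rpow_of_pos_of_le_one_of_nonpos hδ.eps_pos
          hδ.eps_le_one (by rify at hs; linarith)
      _ = ε ^ (-(s : ℝ) / 2) * ε ^ 2 := (rpow_neg_half_mul_sq hδ.eps_pos s).symm
      _ ≤ ε ^ (-(s : ℝ) / 2) * Bfun β ε x :=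
          mul_le_mul_of_nonneg_left ((hδ.sq_le_exp hx.2).trans (exp_le_Bfun β ε x))
            (rpow_nonneg hδ.eps_pos.le _)
  have := hf s hs6 x (hδ.Icc_subset hx)
  nlinarith

theorem bounds_near_zero (hf : LayerBounded C₀ β ε f) (hfd : ContDiff ℝ 6 f)
    (hδ : IsTransitionPoint β ε δ) (hC₀ : 0 ≤ C₀) {s : ℕ} (hs : s ≤ 6) {x : ℝ}
    (hx : x ∈ Icc 0 δ) :
    |iteratedDeriv s (taylorWithinEval f 4 univ δ) x| ≤
        layerConst C₀ β * (1 + ε ^ ((2 : ℝ) - s / 2)) ∧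
      |iteratedDeriv s (f - taylorWithinEval f 4 univ δ) x| ≤
        layerConst C₀ β * ε ^ (-(s : ℝ) / 2) * Bfun β ε x := by
  have hC := le_layerConst β hC₀
  have hε := rpow_nonneg hδ.eps_pos.le ((2 : ℝ) - s / 2)
  have hB : 0 ≤ ε ^ (-(s : ℝ) / 2) * Bfun β ε x :=
    mul_nonneg (rpow_nonneg hδ.eps_pos.le _) (Bfun_nonneg β ε x)
  refine ⟨(hf.abs_iteratedDeriv_taylor_le hδ hC₀ s hx).trans (by nlinarith), ?_⟩
  rw [mul_assoc]
  rcases le_or_gt s 4 with hs4 | hs4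
  · have hK : 6 * C₀ * (1 + (√β)⁻¹) ^ 4 ≤ layerConst C₀ β := by
      unfold layerConst
      nlinarith [mul_nonneg hC₀ ((one_le_layerFactor β).trans' zero_le_one)]
    calc _ ≤ 6 * C₀ * (1 + (√β)⁻¹) ^ 4 * ε ^ (-(s : ℝ) / 2) * Bfun β ε x :=
          hf.abs_iteratedDeriv_sub_taylor_le_of_le_four hfd hδ hC₀ hs4 hx
      _ ≤ _ := by
          rw [mul_assoc]
          exact mul_le_mul_of_nonneg_right hK hB
  · refine (hf.abs_iteratedDeriv_sub_taylor_le_of_four_lt hfd hδ hC₀ hs4 hs hx).trans ?_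
    rw [mul_assoc]
    exact mul_le_mul_of_nonneg_right (by linarith) hB

theorem bounds_near_one (hf : LayerBounded C₀ β ε f) (hfd : ContDiff ℝ 6 f)
    (hδ : IsTransitionPoint β ε δ) (hC₀ : 0 ≤ C₀) {s : ℕ} (hs : s ≤ 6) {x : ℝ}
    (hx : x ∈ Icc (1 - δ) 1) :
    |iteratedDeriv s (taylorWithinEval f 4 univ (1 - δ)) x| ≤
        layerConst C₀ β * (1 + ε ^ ((2 : ℝ) - s / 2)) ∧
      |iteratedDeriv s (f - taylorWithinEval f 4 univ (1 - δ)) x| ≤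
        layerConst C₀ β * ε ^ (-(s : ℝ) / 2) * Bfun β ε x := by
  set g := fun z => f (1 - z)
  have hsub : f - taylorWithinEval f 4 univ (1 - δ) =
      fun z => (g - taylorWithinEval g 4 univ δ) (1 - z) := by
    rw [taylorWithinEval_univ_const_sub]
    funext z
    simp [g]
  rw [hsub, taylorWithinEval_univ_const_sub, iteratedDeriv_comp_const_sub,
    iteratedDeriv_comp_const_sub]
  simp only [smul_eq_mul, abs_mul, abs_pow, abs_neg, abs_one, one_pow, one_mul]
  rw [← Bfun_one_sub]
  exact hf.comp_one_sub.bounds_near_zero (hfd.comp (contDiff_const.sub contDiff_id)) hδ hC₀ hs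
    ⟨by linarith [hx.2], by linarith [hx.1]⟩

end LayerBounded

noncomputable def shishkinRegular (δ : ℝ) (f : ℝ → ℝ) (x : ℝ) : ℝ :=
  if x < δ then taylorWithinEval f 4 univ δ x
  else if x ≤ 1 - δ then f x
  else taylorWithinEval f 4 univ (1 - δ) x

section shishkinRegular

variable {δ x : ℝ} {f : ℝ → ℝ}

theorem shishkinRegular_of_mem (hx : x ∈ Icc δ (1 - δ)) : shishkinRegular δ f x = f x := by
  rw [shishkinRegular, if_neg (not_lt.2 hx.1), if_pos hx.2]

theorem shishkinRegular_of_le (hδ : δ ≤ 1 - δ) (hx : x ≤ δ) :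
    shishkinRegular δ f x = taylorWithinEval f 4 univ δ x := by
  rcases hx.lt_or_eq with hx | rfl
  · exact if_pos hx
  · rw [shishkinRegular_of_mem ⟨le_rfl, hδ⟩, taylorWithinEval_self]

theorem shishkinRegular_of_ge (hδ : δ ≤ 1 - δ) (hx : 1 - δ ≤ x) :
    shishkinRegular δ f x = taylorWithinEval f 4 univ (1 - δ) x := by
  rcases hx.lt_or_eq with hx | rfl
  · rw [shishkinRegular, if_neg (by linarith), if_neg (by linarith)]
  · rw [shishkinRegular_of_mem ⟨hδ, le_rfl⟩, taylorWithinEval_self]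

end shishkinRegular

theorem LayerBounded.shishkinRegular_bounds {C₀ β ε δ : ℝ} {f : ℝ → ℝ}
    (hf : LayerBounded C₀ β ε f) (hfd : ContDiff ℝ 6 f) (hδ : IsTransitionPoint β ε δ)
    (hC₀ : 0 ≤ C₀) {s : ℕ} (hs : s ≤ 6) {x : ℝ} (hx : x ∈ Icc 0 1) (h₁ : x ≠ δ)
    (h₂ : x ≠ 1 - δ) :
    |iteratedDeriv s (shishkinRegular δ f) x| ≤ layerConst C₀ β * (1 + ε ^ ((2 : ℝ) - s / 2)) ∧
      |iteratedDeriv s (f - shishkinRegular δ f) x| ≤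
        layerConst C₀ β * ε ^ (-(s : ℝ) / 2) * Bfun β ε x := by
  have hδ' : δ ≤ 1 - δ := by linarith [hδ.le_half]
  suffices ∃ R, shishkinRegular δ f =ᶠ[𝓝 x] R ∧
      |iteratedDeriv s R x| ≤ layerConst C₀ β * (1 + ε ^ ((2 : ℝ) - s / 2)) ∧
      |iteratedDeriv s (f - R) x| ≤ layerConst C₀ β * ε ^ (-(s : ℝ) / 2) * Bfun β ε x by
    obtain ⟨R, hR, h⟩ := this
    rwa [hR.iteratedDeriv_eq, (EventuallyEq.rfl.sub hR).iteratedDeriv_eq]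
  rcases h₁.lt_or_gt with hlt | hgt
  · exact ⟨_, (eventually_lt_nhds hlt).mono fun z hz => shishkinRegular_of_le hδ' hz.le,
      hf.bounds_near_zero hfd hδ hC₀ hs ⟨hx.1, hlt.le⟩⟩
  rcases h₂.lt_or_gt with hlt | hgt'
  · refine ⟨f, ?_, ?_, ?_⟩
    · filter_upwards [Ioo_mem_nhds hgt hlt] with z hz
      exact shishkinRegular_of_mem (Ioo_subset_Icc_self hz)
    · refine (hf.abs_iteratedDeriv_le_of_mem_Icc hδ hC₀ hs ⟨hgt.le, hlt.le⟩).trans ?_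
      have := le_layerConst β hC₀
      have := rpow_nonneg hδ.eps_pos.le ((2 : ℝ) - s / 2)
      nlinarith
    · rw [sub_self, iteratedDeriv_const_zero, abs_zero]
      exact mul_nonneg (mul_nonneg ((le_layerConst β hC₀).trans' (by linarith))
        (rpow_nonneg hδ.eps_pos.le _)) (Bfun_nonneg β ε x)
  · exact ⟨_, (eventually_gt_nhds hgt').mono fun z hz => shishkinRegular_of_ge hδ' hz.le,
      hf.bounds_near_one hfd hδ hC₀ hs ⟨hgt'.le, hx.2⟩⟩

theorem stmt_4
    (M : ℕ)
    (βs β : ℝ) (hβ : β ∈ Set.Ioo (0:ℝ) βs)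
    (C₀ : ℝ) (hC₀ : 0 < C₀) :
    ∃ C : ℝ, ∀ (T : ℝ), 0 < T → ∀ ε ∈ Set.Ioc (0:ℝ) 1,
    ∀ u : ℝ → ℝ → Fin M → ℝ,
      (∀ k t, ContDiff ℝ 6 (fun x => u x t k)) →
      (∀ k x (i : ℕ), i ≤ 6 →
        ContDiff ℝ 3 (fun t => iteratedDeriv i (fun z => u z t k) x)) →
      (∀ m : ℕ, m ≤ 6 → ∀ k, ∀ x ∈ Set.Icc (0:ℝ) 1, ∀ t ∈ Set.Icc (0:ℝ) T,
        |iteratedDeriv m (fun z => u z t k) x|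
          ≤ C₀ * (1 + ε ^ (-(m:ℝ)/2) * Bfun β ε x)) →
      4 * Real.sqrt (ε/β) * Real.log (1/Real.sqrt ε) ≤ 1/4 →
      ∃ v w : ℝ → ℝ → Fin M → ℝ,
        (∀ x t k, u x t k = v x t k + w x t k) ∧
        (∀ t ∈ Set.Icc (0:ℝ) T, ∀ k,
          ∀ x ∈ Set.Icc (0:ℝ) (4 * Real.sqrt (ε/β) * Real.log (1/Real.sqrt ε)),
            v x t k = ∑ ν ∈ Finset.range 5,
              (x - 4 * Real.sqrt (ε/β) * Real.log (1/Real.sqrt ε))^ν / (ν.factorial : ℝ)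
                * iteratedDeriv ν (fun z => u z t k)
                    (4 * Real.sqrt (ε/β) * Real.log (1/Real.sqrt ε))) ∧
        (∀ t ∈ Set.Icc (0:ℝ) T, ∀ k,
          ∀ x ∈ Set.Icc (4 * Real.sqrt (ε/β) * Real.log (1/Real.sqrt ε))
              (1 - 4 * Real.sqrt (ε/β) * Real.log (1/Real.sqrt ε)),
            v x t k = u x t k) ∧
        (∀ t ∈ Set.Icc (0:ℝ) T, ∀ k,
          ∀ x ∈ Set.Icc (1 - 4 * Real.sqrt (ε/β) * Real.log (1/Real.sqrt ε)) (1:ℝ),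
            v x t k = ∑ ν ∈ Finset.range 5,
              (x - (1 - 4 * Real.sqrt (ε/β) * Real.log (1/Real.sqrt ε)))^ν / (ν.factorial : ℝ)
                * iteratedDeriv ν (fun z => u z t k)
                    (1 - 4 * Real.sqrt (ε/β) * Real.log (1/Real.sqrt ε))) ∧
        (∀ s : ℕ, s ≤ 6 → ∀ k, ∀ t ∈ Set.Icc (0:ℝ) T, ∀ x ∈ Set.Icc (0:ℝ) 1,
          x ≠ 4 * Real.sqrt (ε/β) * Real.log (1/Real.sqrt ε) →
          x ≠ 1 - 4 * Real.sqrt (ε/β) * Real.log (1/Real.sqrt ε) →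
          |iteratedDeriv s (fun z => v z t k) x| ≤ C * (1 + ε ^ ((2:ℝ) - (s:ℝ)/2)) ∧
          |iteratedDeriv s (fun z => w z t k) x| ≤ C * ε ^ (-(s:ℝ)/2) * Bfun β ε x) := by
  refine ⟨layerConst C₀ β, fun T _ ε hε u hu _ hbd hδ => ?_⟩
  have hδp := isTransitionPoint_of_le hβ.1 hε.1 hε.2 hδ
  set δ := 4 * √(ε / β) * log (1 / √ε)
  have hδ' : δ ≤ 1 - δ := by linarith
  refine ⟨fun x t k => shishkinRegular δ (fun z => u z t k) x,
    fun x t k => u x t k - shishkinRegular δ (fun z => u z t k) x,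
    fun _ _ _ => (add_sub_cancel _ _).symm, ?_, ?_, ?_, ?_⟩
  · intro t _ k x hx
    exact (shishkinRegular_of_le hδ' hx.2).trans (taylorWithinEval_univ_eq_sum _ _ _ _)
  · intro t _ k x hx
    exact shishkinRegular_of_mem hx
  · intro t _ k x hx
    exact (shishkinRegular_of_ge hδ' hx.1).trans (taylorWithinEval_univ_eq_sum _ _ _ _)
  · intro s hs k t ht x hx h₁ h₂
    have hut : LayerBounded C₀ β ε fun z => u z t k := fun m hm y hy => hbd m hm k y hy t ht
    exact hut.shishkinRegular_bounds (hu k t) hδp hC₀.le hs hx h₁ h₂
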